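/- For all n ≥ 0, the forward difference a_{n+1} - a_n equals a_{⌊(n+2)/2⌋} + a_{⌈(n+2)/2⌉}. -/

import Mathlib

/-- `pre2 s` is the multiset of all pairwise products of two distinct entries
(by position) of the multiset `s`, i.e. the summands of `e₂` evaluated at `s`. -/
def pre2 (s : Multiset ℕ) : Multiset ℕ := (Multiset.powersetCard 2 s).map Multiset.prod

open Classical in
/-- The finset of binary partitions of `n`: partitions all of whose parts are powers of 2. -/
noncomputable def binaryPartitions (n : ℕ) : Finset (Nat.Partition n) :=
  Finset.univ.filter fun l => ∀ p ∈ l.parts, ∃ i : ℕ, p = 2 ^ i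

/-- `a n = m₁(ImB₂(n))`: the total number of parts equal to 1 in the image of `pre2`
on binary partitions of `n` with at least two parts; by injectivity this equals
`∑_{λ ∈ B(n)} C(m₁(λ), 2)`. -/
noncomputable def a (n : ℕ) : ℕ :=
  ∑ l ∈ binaryPartitions n, Nat.choose (l.parts.count 1) 2

/-!
Write `b n` for the number of binary partitions of `n` and `S n` for the total number of parts `1`
among them. Deleting one part `1` matches the binary partitions of `n + 1` containing a `1` with
those of `n`, which gives `a (n + 1) = a n + S n`, `S (n + 1) = S n + b n` and
`b (n + 1) = b n + #{1-free binary partitions of n + 1}`. A `1`-free binary partition has only even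
parts, so there is none of an odd number, and halving the parts matches those of `2k` with the
binary partitions of `k`. Hence `b (2k) = S (k + 1) = b (2k + 1)`, i.e. `b n = S (n / 2 + 1)`, and
`S n = a (n / 2 + 1) + a ((n + 1) / 2 + 1)` follows by induction on `n`.
-/

open Finset

namespace Nat.Partition

def double {n : ℕ} (μ : n.Partition) : (2 * n).Partition where
  parts := μ.parts.map (2 * ·)
  parts_pos := by
    simp only [Multiset.mem_map, forall_exists_index, and_imp]
    rintro _ p hp rfl
    have := μ.parts_pos hp
    omega
  parts_sum := by rw [Multiset.sum_map_mul_left, Multiset.map_id', μ.parts_sum]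

def halve {n : ℕ} (l : (2 * n).Partition) (h : ∀ p ∈ l.parts, 2 ∣ p) : n.Partition where
  parts := l.parts.map (· / 2)
  parts_pos := by
    simp only [Multiset.mem_map, forall_exists_index, and_imp]
    rintro _ p hp rfl
    have := l.parts_pos hp
    have := h p hp
    omega
  parts_sum := by
    have hmap : (l.parts.map (· / 2)).map (2 * ·) = l.parts := by
      rw [Multiset.map_map]
      exact (Multiset.map_congr rfl fun p hp => Nat.mul_div_cancel' (h p hp)).trans
        l.parts.map_id
    have hsum := congrArg Multiset.sum hmap
    rw [Multiset.sum_map_mul_left, Multiset.map_id', l.parts_sum] at hsum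
    omega

lemma double_halve {n : ℕ} (l : (2 * n).Partition) (h : ∀ p ∈ l.parts, 2 ∣ p) :
    (halve l h).double = l := by
  ext1
  simp only [double, halve, Multiset.map_map]
  exact (Multiset.map_congr rfl fun p hp => Nat.mul_div_cancel' (h p hp)).trans l.parts.map_id

lemma halve_double {n : ℕ} (μ : n.Partition) (h : ∀ p ∈ μ.double.parts, 2 ∣ p) :
    halve μ.double h = μ := by
  ext1
  simp [double, halve, Multiset.map_map]

end Nat.Partition

lemma mem_binaryPartitions {n : ℕ} {l : n.Partition} :
    l ∈ binaryPartitions n ↔ ∀ p ∈ l.parts, ∃ i : ℕ, p = 2 ^ i := by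
  simp [binaryPartitions]

lemma exists_eq_two_mul_of_mem_binaryPartitions {n : ℕ} {l : n.Partition}
    (hl : l ∈ binaryPartitions n) {p : ℕ} (hp : p ∈ l.parts) (h1 : p ≠ 1) :
    ∃ j : ℕ, p = 2 * 2 ^ j := by
  obtain ⟨_ | j, rfl⟩ := mem_binaryPartitions.1 hl p hp
  · exact absurd (pow_zero 2) h1
  · exact ⟨j, pow_succ' 2 j⟩

lemma one_mem_parts_of_mem_binaryPartitions_odd {k : ℕ} {l : (2 * k + 1).Partition}
    (hl : l ∈ binaryPartitions (2 * k + 1)) : 1 ∈ l.parts := by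
  by_contra h1
  have heven : 2 ∣ l.parts.sum := Multiset.dvd_sum fun p hp => by
    obtain ⟨j, rfl⟩ :=
      exists_eq_two_mul_of_mem_binaryPartitions hl hp (ne_of_mem_of_not_mem hp h1)
    exact dvd_mul_right 2 _
  rw [l.parts_sum] at heven
  omega

lemma sum_binaryPartitions_succ {M : Type*} [AddCommMonoid M] (n : ℕ) (f : ℕ → M) :
    ∑ l ∈ binaryPartitions (n + 1), f (l.parts.count 1)
      = #{l ∈ binaryPartitions (n + 1) | 1 ∉ l.parts} • f 0
        + ∑ μ ∈ binaryPartitions n, f (μ.parts.count 1 + 1) := by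
  let e := Nat.Partition.partitionWithPartEquiv (n := n + 1) le_rfl (by omega)
  rw [← sum_filter_not_add_sum_filter _ (1 ∈ ·.parts)]
  congr 1
  · rw [← sum_const]
    exact sum_congr rfl fun l hl => by rw [Multiset.count_eq_zero.2 (mem_filter.1 hl).2]
  · refine sum_bij' (fun l hl => e ⟨l, (mem_filter.1 hl).2⟩) (fun μ _ => (e.symm μ).1)
      ?_ ?_ ?_ ?_ ?_
    · intro l hl
      rw [mem_filter, mem_binaryPartitions] at hl
      rw [mem_binaryPartitions]
      intro p hp
      exact hl.1 p (Multiset.mem_of_mem_erase hp)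
    · intro μ hμ
      rw [mem_filter, mem_binaryPartitions]
      refine ⟨fun p hp => ?_, (e.symm μ).2⟩
      rw [Nat.Partition.partitionWithPartEquiv_symm_apply_parts, Multiset.mem_cons] at hp
      rcases hp with rfl | hp
      · exact ⟨0, rfl⟩
      · exact mem_binaryPartitions.1 hμ p hp
    · intro l _
      simp [e]
    · intro μ _
      simp [e]
    · intro l hl
      rw [Nat.Partition.partitionWithPartEquiv_apply_parts, Multiset.count_erase_self,
        Nat.sub_add_cancel (Multiset.one_le_count_iff_mem.2 (mem_filter.1 hl).2)]

noncomputable def numBinaryPartitions (n : ℕ) : ℕ := #(binaryPartitions n)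

noncomputable def totalOnes (n : ℕ) : ℕ := ∑ l ∈ binaryPartitions n, l.parts.count 1

lemma card_filter_one_not_mem_binaryPartitions_two_mul (k : ℕ) :
    #{l ∈ binaryPartitions (2 * k) | 1 ∉ l.parts} = numBinaryPartitions k := by
  have heven {l : (2 * k).Partition} (hl : l ∈ {l ∈ binaryPartitions (2 * k) | 1 ∉ l.parts})
      (p : ℕ) (hp : p ∈ l.parts) : ∃ j : ℕ, p = 2 * 2 ^ j :=
    exists_eq_two_mul_of_mem_binaryPartitions (mem_filter.1 hl).1 hp
      (ne_of_mem_of_not_mem hp (mem_filter.1 hl).2)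
  refine card_bij' (fun l hl => l.halve fun p hp => ?_) (fun μ _ => μ.double) ?_ ?_ ?_ ?_
  · obtain ⟨j, rfl⟩ := heven hl p hp
    exact dvd_mul_right 2 _
  · intro l hl
    rw [mem_binaryPartitions]
    simp only [Nat.Partition.halve, Multiset.mem_map, forall_exists_index, and_imp]
    rintro _ p hp rfl
    obtain ⟨j, rfl⟩ := heven hl p hp
    exact ⟨j, by omega⟩
  · intro μ hμ
    rw [mem_filter, mem_binaryPartitions]
    simp only [Nat.Partition.double, Multiset.mem_map, forall_exists_index, and_imp]
    refine ⟨?_, fun ⟨q, _, hq⟩ => by omega⟩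
    rintro _ q hq rfl
    obtain ⟨i, rfl⟩ := mem_binaryPartitions.1 hμ q hq
    exact ⟨i + 1, (pow_succ' 2 i).symm⟩
  · exact fun l _ => Nat.Partition.double_halve l _
  · exact fun μ _ => Nat.Partition.halve_double μ _

lemma numBinaryPartitions_succ (n : ℕ) :
    numBinaryPartitions (n + 1)
      = numBinaryPartitions n + #{l ∈ binaryPartitions (n + 1) | 1 ∉ l.parts} := by
  have h := sum_binaryPartitions_succ n fun _ => 1
  simp only [smul_eq_mul, mul_one, ← card_eq_sum_ones] at h
  rw [numBinaryPartitions, numBinaryPartitions, h, add_comm]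

lemma totalOnes_succ (n : ℕ) : totalOnes (n + 1) = totalOnes n + numBinaryPartitions n := by
  simpa [totalOnes, numBinaryPartitions, sum_add_distrib] using sum_binaryPartitions_succ n id

lemma a_succ (n : ℕ) : a (n + 1) = a n + totalOnes n := by
  rw [a, a, totalOnes, sum_binaryPartitions_succ n (Nat.choose · 2), Nat.choose_zero_succ,
    smul_zero, zero_add, ← sum_add_distrib]
  exact sum_congr rfl fun l _ => by rw [Nat.choose_succ_succ, Nat.choose_one_right, add_comm]

lemma numBinaryPartitions_two_mul_add_one (k : ℕ) :
    numBinaryPartitions (2 * k + 1) = numBinaryPartitions (2 * k) := by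
  rw [numBinaryPartitions_succ, filter_false_of_mem fun l hl => not_not.2 <|
    one_mem_parts_of_mem_binaryPartitions_odd hl, card_empty, add_zero]

lemma numBinaryPartitions_two_mul_add_two (k : ℕ) :
    numBinaryPartitions (2 * k + 2)
      = numBinaryPartitions (2 * k + 1) + numBinaryPartitions (k + 1) := by
  rw [numBinaryPartitions_succ (2 * k + 1)]
  exact congrArg _ (card_filter_one_not_mem_binaryPartitions_two_mul (k + 1))

lemma binaryPartitions_zero : binaryPartitions 0 = {default} := by
  ext l
  simp [binaryPartitions, Unique.eq_default l]

lemma numBinaryPartitions_zero : numBinaryPartitions 0 = 1 := by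
  rw [numBinaryPartitions, binaryPartitions_zero, card_singleton]

lemma totalOnes_zero : totalOnes 0 = 0 := by
  simp [totalOnes, binaryPartitions_zero]

lemma a_zero : a 0 = 0 := by
  simp [a, binaryPartitions_zero]

lemma numBinaryPartitions_two_mul (k : ℕ) : numBinaryPartitions (2 * k) = totalOnes (k + 1) := by
  induction k with
  | zero => rw [numBinaryPartitions_zero, totalOnes_succ, totalOnes_zero, numBinaryPartitions_zero]
  | succ k ih =>
    rw [mul_add_one, numBinaryPartitions_two_mul_add_two, numBinaryPartitions_two_mul_add_one, ih,
      totalOnes_succ (k + 1)]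

lemma numBinaryPartitions_eq_totalOnes (n : ℕ) :
    numBinaryPartitions n = totalOnes (n / 2 + 1) := by
  obtain ⟨k, rfl | rfl⟩ := Nat.even_or_odd' n
  · rw [numBinaryPartitions_two_mul, Nat.mul_div_cancel_left k two_pos]
  · rw [numBinaryPartitions_two_mul_add_one, numBinaryPartitions_two_mul]
    congr 2
    omega

lemma totalOnes_eq (n : ℕ) : totalOnes n = a (n / 2 + 1) + a ((n + 1) / 2 + 1) := by
  induction n with
  | zero => rw [totalOnes_zero, a_succ, a_zero, totalOnes_zero]
  | succ n ih =>
    have hhalf : (n + 2) / 2 = n / 2 + 1 := by omega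
    rw [totalOnes_succ, ih, numBinaryPartitions_eq_totalOnes, hhalf, a_succ (n / 2 + 1)]
    ring

theorem stmt_6 (n : ℕ) :
    (a (n + 1) : ℤ) - (a n : ℤ) = (a ((n + 2) / 2) : ℤ) + (a ((n + 3) / 2) : ℤ) := by
  rw [a_succ, totalOnes_eq, show (n + 2) / 2 = n / 2 + 1 by omega,
    show (n + 3) / 2 = (n + 1) / 2 + 1 by omega]
  push_cast
  ring
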